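/- arXiv:1003.4436 — 2 statements merged into one kernel-verified Lean document; each statement's English description precedes it below -/
import Mathlib

section
/- Suppose f : ℕ → ℚ(q) is a nonzero q-holonomic sequence annihilated by P = Σ_{(i,j,k)∈A} a_{ijk} q^k M^j L^i with all a_{ijk} ≠ 0, and suppose the degree δ(n) = deg_q f_n(q) satisfies, for all large n in some arithmetic progression, δ(n+i) − δ(n) = γ̂₂·i·n + γ̂₂·C(i,2) + γ̂₁·i for fixed rationals γ̂₁, γ̂₂. Then there exist distinct pairs (i,j) ≠ (i',j') occurring as (L,M)-exponents in A with γ̂₂ = −(j−j')/(i−i'); in particular −γ̂₂ is a slope of an edge of the Newton polygon N_{P,0} (the convex hull of the (i,j) exponents). -/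
noncomputable section

/-- The field `ℚ(q)` of rational functions in `q`. -/
abbrev QField := RatFunc ℚ

lemma my_intDegree_inv (x : QField) (hx : x ≠ 0) : (x⁻¹).intDegree = -x.intDegree := by
  have h := RatFunc.intDegree_mul hx (inv_ne_zero hx)
  rw [mul_inv_cancel₀ hx, RatFunc.intDegree_one] at h
  omega

lemma my_intDegree_pow (x : QField) (hx : x ≠ 0) (n : ℕ) :
    (x ^ n).intDegree = n * x.intDegree := by
  induction n with
  | zero => simp [RatFunc.intDegree_one]
  | succ n ih =>
    rw [pow_succ, RatFunc.intDegree_mul (pow_ne_zero _ hx) hx, ih]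
    push_cast; ring

lemma my_intDegree_zpow (x : QField) (hx : x ≠ 0) (k : ℤ) :
    (x ^ k).intDegree = k * x.intDegree := by
  cases k with
  | ofNat n => simpa using my_intDegree_pow x hx n
  | negSucc n =>
    rw [zpow_negSucc, my_intDegree_inv _ (pow_ne_zero _ hx), my_intDegree_pow x hx]
    simp [Int.negSucc_eq]; ring

lemma my_intDegree_sum_le {α : Type*} [DecidableEq α] (t : α → QField) :
    ∀ A : Finset α, (∑ p ∈ A, t p) ≠ 0 →
      ∃ p ∈ A, (∑ p ∈ A, t p).intDegree ≤ (t p).intDegree := by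
  intro A
  induction A using Finset.induction with
  | empty => simp
  | @insert b s hx ih =>
    intro hs
    rw [Finset.sum_insert hx] at hs ⊢
    by_cases h0 : ∑ p ∈ s, t p = 0
    · exact ⟨b, Finset.mem_insert_self _ _, by rw [h0, add_zero]⟩
    · have hle := RatFunc.intDegree_add_le h0 hs
      rcases le_max_iff.mp hle with h | h
      · exact ⟨b, Finset.mem_insert_self _ _, h⟩
      · obtain ⟨p, hp, hp2⟩ := ih h0
        exact ⟨p, Finset.mem_insert_of_mem hp, le_trans h hp2⟩

lemma my_exists_eq_intDegree {α : Type*} [DecidableEq α] (t : α → QField) (A : Finset α)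
    (hA : A.Nonempty)
    (ht : ∀ p ∈ A, t p ≠ 0) (hsum : ∑ p ∈ A, t p = 0) :
    ∃ p ∈ A, ∃ p' ∈ A, p ≠ p' ∧ (t p).intDegree = (t p').intDegree := by
  obtain ⟨p₀, hp₀, hmax⟩ := A.exists_max_image (fun p => (t p).intDegree) hA
  have hsum' : ∑ p ∈ A.erase p₀, t p = -t p₀ := by
    rw [← Finset.add_sum_erase A t hp₀] at hsum
    linear_combination hsum
  have hne : ∑ p ∈ A.erase p₀, t p ≠ 0 := by
    rw [hsum']; exact neg_ne_zero.mpr (ht p₀ hp₀)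
  obtain ⟨p, hp, hle⟩ := my_intDegree_sum_le t _ hne
  rw [hsum', RatFunc.intDegree_neg] at hle
  refine ⟨p₀, hp₀, p, Finset.mem_of_mem_erase hp, (Finset.ne_of_mem_erase hp).symm, ?_⟩
  exact le_antisymm hle (hmax p (Finset.mem_of_mem_erase hp))

set_option maxHeartbeats 1000000 in
/-- Suppose the nonzero sequence `f : ℕ → ℚ(q)` is annihilated by
`P = Σ_{(i,j,k)∈A} a_{ijk} q^k M^j L^i` (all coefficients `a_{ijk}` nonzero), and the
degree `δ(n) = deg_q f_n(q)` satisfies, for all large `n` in an arithmetic progression,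
`δ(n+i) − δ(n) = γ̂₂·i·n + γ̂₂·C(i,2) + γ̂₁·i`.  Then there are two triples of `A` with
distinct `(L,M)`-exponent pairs `(i,j) ≠ (i',j')`, with `i ≠ i'`, such that
`γ̂₂ = −(j−j')/(i−i')`; in particular `−γ̂₂` is a slope of the Newton polygon `N_{P,0}`. -/
theorem stmt_8 (A : Finset (ℕ × ℕ × ℤ)) (hA : A.Nonempty)
    (a : ℕ × ℕ × ℤ → ℚ) (ha : ∀ p ∈ A, a p ≠ 0)
    (f : ℕ → QField) (hf : ∀ n, f n ≠ 0)
    (hann : ∀ n : ℕ,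
      ∑ p ∈ A, (algebraMap ℚ QField (a p)) * (RatFunc.X : QField) ^ (p.2.2 : ℤ) *
        (RatFunc.X : QField) ^ (p.2.1 * n) * f (n + p.1) = 0)
    (γhat₁ γhat₂ : ℚ) (N r n₀ : ℕ) (hN : 1 ≤ N)
    (hdeg : ∀ n : ℕ, n₀ ≤ n → n ≡ r [MOD N] → ∀ i : ℕ, (∃ j k, (i, j, k) ∈ A) →
      (((f (n + i)).intDegree : ℚ) - ((f n).intDegree : ℚ) =
        γhat₂ * (i : ℚ) * (n : ℚ) + γhat₂ * (i.choose 2 : ℚ) + γhat₁ * (i : ℚ))) :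
    ∃ p ∈ A, ∃ p' ∈ A, (p.1, p.2.1) ≠ (p'.1, p'.2.1) ∧ p.1 ≠ p'.1 ∧
      γhat₂ = -(((p.2.1 : ℚ) - (p'.2.1 : ℚ)) / ((p.1 : ℚ) - (p'.1 : ℚ))) := by
  classical
  set t : ℕ → (ℕ × ℕ × ℤ) → QField := fun n p =>
    (algebraMap ℚ QField (a p)) * (RatFunc.X : QField) ^ (p.2.2 : ℤ) *
      (RatFunc.X : QField) ^ (p.2.1 * n) * f (n + p.1) with ht
  have htne : ∀ n, ∀ p ∈ A, t n p ≠ 0 := by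
    intro n p hp
    have h1 : (algebraMap ℚ QField (a p)) ≠ 0 :=
      fun hh => ha p hp ((map_eq_zero _).mp hh)
    exact mul_ne_zero (mul_ne_zero (mul_ne_zero h1
      (zpow_ne_zero _ RatFunc.X_ne_zero)) (pow_ne_zero _ RatFunc.X_ne_zero)) (hf _)
  have hdegt : ∀ n, ∀ p ∈ A, ((t n p).intDegree : ℚ)
      = (p.2.2 : ℚ) + (p.2.1 : ℚ) * (n : ℚ) + ((f (n + p.1)).intDegree : ℚ) := by
    intro n p hp
    have h1 : (algebraMap ℚ QField (a p)) ≠ 0 :=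
      fun hh => ha p hp ((map_eq_zero _).mp hh)
    have e : (t n p).intDegree = p.2.2 + (p.2.1 * n : ℕ) + (f (n + p.1)).intDegree := by
      rw [ht]
      rw [RatFunc.intDegree_mul (mul_ne_zero (mul_ne_zero h1
        (zpow_ne_zero _ RatFunc.X_ne_zero)) (pow_ne_zero _ RatFunc.X_ne_zero)) (hf _),
        RatFunc.intDegree_mul (mul_ne_zero h1 (zpow_ne_zero _ RatFunc.X_ne_zero))
          (pow_ne_zero _ RatFunc.X_ne_zero),
        RatFunc.intDegree_mul h1 (zpow_ne_zero _ RatFunc.X_ne_zero),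
        my_intDegree_zpow _ RatFunc.X_ne_zero, my_intDegree_pow _ RatFunc.X_ne_zero,
        RatFunc.intDegree_X]
      have hC : (algebraMap ℚ QField (a p)).intDegree = 0 := by
        rw [show algebraMap ℚ QField (a p) = RatFunc.C (a p) from (eq_ratCast (algebraMap ℚ QField) (a p)).trans (eq_ratCast (RatFunc.C : ℚ →+* QField) (a p)).symm, RatFunc.intDegree_C]
      rw [hC]; ring
    rw [e]; push_cast; ring
  -- key: for each valid n there is a pair with equal "linearized" degrees
  have key : ∀ n, n₀ ≤ n ∧ n ≡ r [MOD N] →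
      ∃ p, p ∈ A ∧ ∃ p', p' ∈ A ∧ p ≠ p' ∧
        ((p.2.2 : ℚ) + ((p.2.1 : ℚ) + γhat₂ * (p.1 : ℚ)) * (n : ℚ)
            + γhat₂ * (p.1.choose 2 : ℚ) + γhat₁ * (p.1 : ℚ)
          = (p'.2.2 : ℚ) + ((p'.2.1 : ℚ) + γhat₂ * (p'.1 : ℚ)) * (n : ℚ)
            + γhat₂ * (p'.1.choose 2 : ℚ) + γhat₁ * (p'.1 : ℚ)) := by
    intro n hn
    obtain ⟨p, hp, p', hp', hne, heq⟩ :=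
      my_exists_eq_intDegree (t n) A hA (htne n) (hann n)
    refine ⟨p, hp, p', hp', hne, ?_⟩
    have e1 := hdegt n p hp
    have e2 := hdegt n p' hp'
    have d1 := hdeg n hn.1 hn.2 p.1 ⟨p.2.1, p.2.2, hp⟩
    have d2 := hdeg n hn.1 hn.2 p'.1 ⟨p'.2.1, p'.2.2, hp'⟩
    have hq : ((t n p).intDegree : ℚ) = ((t n p').intDegree : ℚ) := by rw [heq]
    rw [e1, e2] at hq
    nlinarith [hq, d1, d2]
  -- the valid set is infinite
  have hinf : {n : ℕ | n₀ ≤ n ∧ n ≡ r [MOD N]}.Infinite := by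
    apply Set.infinite_of_injective_forall_mem (f := fun m : ℕ => r + N * (n₀ + m))
    · intro m m' h
      simp only at h
      have := Nat.eq_of_mul_eq_mul_left (lt_of_lt_of_le Nat.zero_lt_one hN)
        (by omega : N * (n₀ + m) = N * (n₀ + m'))
      omega
    · intro m
      constructor
      · have := Nat.le_mul_of_pos_left (n₀ + m) (lt_of_lt_of_le Nat.zero_lt_one hN)
        omega
      · show (r + N * (n₀ + m)) % N = r % N
        exact Nat.add_mul_mod_self_left r N (n₀ + m)
  -- choose the pair for each valid n
  let g : ℕ → (ℕ × ℕ × ℤ) × (ℕ × ℕ × ℤ) := fun n =>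
    if h : n₀ ≤ n ∧ n ≡ r [MOD N] then
      ((key n h).choose, (key n h).choose_spec.2.choose)
    else (hA.choose, hA.choose)
  have gprop : ∀ n, (n₀ ≤ n ∧ n ≡ r [MOD N]) →
      (g n).1 ∈ A ∧ (g n).2 ∈ A ∧ (g n).1 ≠ (g n).2 ∧
        (((g n).1.2.2 : ℚ) + (((g n).1.2.1 : ℚ) + γhat₂ * ((g n).1.1 : ℚ)) * (n : ℚ)
            + γhat₂ * ((g n).1.1.choose 2 : ℚ) + γhat₁ * ((g n).1.1 : ℚ)
          = ((g n).2.2.2 : ℚ) + (((g n).2.2.1 : ℚ) + γhat₂ * ((g n).2.1 : ℚ)) * (n : ℚ)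
            + γhat₂ * ((g n).2.1.choose 2 : ℚ) + γhat₁ * ((g n).2.1 : ℚ)) := by
    intro n h
    have hg : g n = ((key n h).choose, (key n h).choose_spec.2.choose) := dif_pos h
    rw [hg]
    obtain ⟨h1, h2⟩ := (key n h).choose_spec
    obtain ⟨h3, h4, h5⟩ := h2.choose_spec
    exact ⟨h1, h3, h4, h5⟩
  have hmaps : Set.MapsTo g {n : ℕ | n₀ ≤ n ∧ n ≡ r [MOD N]} ↑(A ×ˢ A) := by
    intro n hn
    have h := gprop n hn
    simp only [Finset.coe_product, Set.mem_prod]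
    exact ⟨h.1, h.2.1⟩
  obtain ⟨n₁, hn₁, n₂, hn₂, hne12, hgeq⟩ :=
    hinf.exists_ne_map_eq_of_mapsTo hmaps (A ×ˢ A).finite_toSet
  obtain ⟨hmem1, hmem2, hnepair, E₁⟩ := gprop n₁ hn₁
  obtain ⟨-, -, -, E₂⟩ := gprop n₂ hn₂
  rw [← hgeq] at E₂
  set p := (g n₁).1 with hpdef
  set p' := (g n₁).2 with hp'def
  -- slope equation
  have hdn : ((n₁ : ℚ) - (n₂ : ℚ)) ≠ 0 :=
    sub_ne_zero.mpr (by exact_mod_cast hne12)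
  have hslope : (p.2.1 : ℚ) + γhat₂ * (p.1 : ℚ) = (p'.2.1 : ℚ) + γhat₂ * (p'.1 : ℚ) := by
    have hm : ((p.2.1 : ℚ) + γhat₂ * (p.1 : ℚ)) * ((n₁ : ℚ) - (n₂ : ℚ))
        = ((p'.2.1 : ℚ) + γhat₂ * (p'.1 : ℚ)) * ((n₁ : ℚ) - (n₂ : ℚ)) := by
      nlinarith [E₁, E₂]
    exact mul_right_cancel₀ hdn hm
  by_cases hii : p.1 = p'.1
  · exfalso
    have hji : (p.2.1 : ℚ) = (p'.2.1 : ℚ) := by rw [hii] at hslope; linarith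
    have hj : p.2.1 = p'.2.1 := by exact_mod_cast hji
    have hk : (p.2.2 : ℚ) = (p'.2.2 : ℚ) := by
      rw [hii, hj] at E₁; linarith
    have hk' : p.2.2 = p'.2.2 := by exact_mod_cast hk
    exact hnepair (Prod.ext hii (Prod.ext hj hk'))
  · refine ⟨p, hmem1, p', hmem2, ?_, hii, ?_⟩
    · intro h
      exact hii (Prod.ext_iff.mp h).1
    · have hcast : (p.1 : ℚ) ≠ (p'.1 : ℚ) := fun hh => hii (Nat.cast_injective hh)
      have hsub : ((p.1 : ℚ) - (p'.1 : ℚ)) ≠ 0 := sub_ne_zero.mpr hcast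
      field_simp
      nlinarith [hslope]
end
end

section
/- For polynomials F, G ∈ ℂ[x,y] with F, G ≠ 0, the Newton polygon of F·G equals the Minkowski sum of the Newton polygons of F and G. -/
set_option maxHeartbeats 1000000

open Pointwise

/-- The Newton polygon of a polynomial in two variables: the convex hull in `ℝ²` of its
set of exponent vectors. -/
noncomputable def newtonPolygon (F : MvPolynomial (Fin 2) ℂ) : Set (ℝ × ℝ) :=
  convexHull ℝ ((fun d : Fin 2 →₀ ℕ => ((d 0 : ℝ), (d 1 : ℝ))) '' (F.support : Set (Fin 2 →₀ ℕ)))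

/-- For nonzero `F, G ∈ ℂ[x,y]`, the Newton polygon of `F·G` is the Minkowski sum of the
Newton polygons of `F` and `G`. -/
theorem stmt_13 (F G : MvPolynomial (Fin 2) ℂ) (hF : F ≠ 0) (hG : G ≠ 0) :
    newtonPolygon (F * G) = newtonPolygon F + newtonPolygon G := by
  classical
  set φ : (Fin 2 →₀ ℕ) → ℝ × ℝ := fun d => ((d 0 : ℝ), (d 1 : ℝ)) with hφ
  have hφ_inj : Function.Injective φ := by
    intro d e h
    simp only [hφ, Prod.mk.injEq, Nat.cast_inj] at h
    ext i
    fin_cases i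
    · exact h.1
    · exact h.2
  have hφ_add : ∀ a b, φ (a + b) = φ a + φ b := by
    intro a b
    simp [hφ, Prod.ext_iff]
  set A : Set (ℝ × ℝ) := φ '' (F.support : Set (Fin 2 →₀ ℕ)) with hA
  set B : Set (ℝ × ℝ) := φ '' (G.support : Set (Fin 2 →₀ ℕ)) with hB
  have hAB_fin : (A + B).Finite :=
    (F.support.finite_toSet.image φ).add (G.support.finite_toSet.image φ)
  have hNPFG : newtonPolygon (F * G) = convexHull ℝ (φ '' ((F * G).support : Set (Fin 2 →₀ ℕ))) :=
    rfl
  -- forward inclusion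
  have h1 : newtonPolygon (F * G) ⊆ newtonPolygon F + newtonPolygon G := by
    rw [newtonPolygon, newtonPolygon, newtonPolygon, ← convexHull_add]
    apply convexHull_mono
    rintro _ ⟨d, hd, rfl⟩
    obtain ⟨a, ha, b, hb, rfl⟩ := Finset.mem_add.mp (MvPolynomial.support_mul F G hd)
    exact ⟨φ a, ⟨a, ha, rfl⟩, φ b, ⟨b, hb, rfl⟩, (hφ_add a b).symm⟩
  -- extreme points of the sum are in the support of F*G
  have hext : (convexHull ℝ (A + B)).extremePoints ℝ ⊆
      φ '' ((F * G).support : Set (Fin 2 →₀ ℕ)) := by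
    intro x hx
    have hxAB : x ∈ A + B := extremePoints_convexHull_subset hx
    obtain ⟨_, ⟨d1, hd1, rfl⟩, _, ⟨d2, hd2, rfl⟩, hsum0⟩ := hxAB
    have hsum : φ d1 + φ d2 = x := hsum0
    rw [convexHull_add] at hx
    -- uniqueness of decomposition at an extreme point
    have huniq : ∀ a ∈ convexHull ℝ A, ∀ b ∈ convexHull ℝ B, a + b = x →
        a = φ d1 ∧ b = φ d2 := by
      intro a ha b hb hab
      have hu : a + φ d2 ∈ convexHull ℝ A + convexHull ℝ B :=
        Set.add_mem_add ha (subset_convexHull ℝ B ⟨d2, hd2, rfl⟩)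
      have hv : φ d1 + b ∈ convexHull ℝ A + convexHull ℝ B :=
        Set.add_mem_add (subset_convexHull ℝ A ⟨d1, hd1, rfl⟩) hb
      have hmid : x ∈ openSegment ℝ (a + φ d2) (φ d1 + b) := by
        refine ⟨1/2, 1/2, by norm_num, by norm_num, by norm_num, ?_⟩
        have hxx : (a + φ d2) + (φ d1 + b) = (a + b) + (φ d1 + φ d2) := by abel
        rw [hab, hsum] at hxx
        rw [← smul_add, hxx, smul_add, ← add_smul]
        norm_num
      have hux := hx.2 hu hv hmid
      constructor
      · have h' : a + φ d2 = φ d1 + φ d2 := by rw [hux, ← hsum]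
        exact add_right_cancel h'
      · have h' : φ d1 + b = φ d1 + φ d2 := by rw [hx.2 hv hu (openSegment_symm (𝕜 := ℝ) (a + φ d2) (φ d1 + b) ▸ hmid), ← hsum]
        exact add_left_cancel h'
    -- the coefficient of F*G at d1 + d2 is a single product
    have hcoeff : MvPolynomial.coeff (d1 + d2) (F * G) =
        MvPolynomial.coeff d1 F * MvPolynomial.coeff d2 G := by
      rw [MvPolynomial.coeff_mul]
      refine Finset.sum_eq_single (d1, d2) ?_ ?_
      · rintro ⟨e1, e2⟩ he hne
        rw [Finset.HasAntidiagonal.mem_antidiagonal] at he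
        by_contra hc
        have he1 : MvPolynomial.coeff e1 F ≠ 0 := fun h => hc (by simp [h])
        have he2 : MvPolynomial.coeff e2 G ≠ 0 := fun h => hc (by simp [h])
        have hsum' : φ e1 + φ e2 = x := by
          rw [← hφ_add, he, hφ_add, hsum]
        obtain ⟨h1', h2'⟩ := huniq (φ e1)
          (subset_convexHull ℝ A ⟨e1, by simpa using he1, rfl⟩) (φ e2)
          (subset_convexHull ℝ B ⟨e2, by simpa using he2, rfl⟩) hsum'
        exact hne (Prod.ext (hφ_inj h1') (hφ_inj h2'))
      · intro h
        simp at h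
    refine ⟨d1 + d2, ?_, by rw [hφ_add, hsum]⟩
    simp only [Finset.mem_coe, MvPolynomial.mem_support_iff, hcoeff]
    exact mul_ne_zero (MvPolynomial.mem_support_iff.mp hd1)
      (MvPolynomial.mem_support_iff.mp hd2)
  -- reverse inclusion via Krein–Milman
  have h2 : newtonPolygon F + newtonPolygon G ⊆ newtonPolygon (F * G) := by
    have hclosed : IsClosed (newtonPolygon (F * G)) := by
      rw [hNPFG]
      exact (((F * G).support.finite_toSet.image φ).isCompact_convexHull ℝ).isClosed
    have hKM := closure_convexHull_extremePoints (hAB_fin.isCompact_convexHull ℝ)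
      (convex_convexHull ℝ (A + B))
    have hsub : convexHull ℝ ((convexHull ℝ (A + B)).extremePoints ℝ) ⊆
        newtonPolygon (F * G) := by
      rw [hNPFG]
      exact convexHull_min (hext.trans (subset_convexHull ℝ _)) (convex_convexHull ℝ _)
    calc newtonPolygon F + newtonPolygon G = convexHull ℝ (A + B) := (convexHull_add A B).symm
      _ = closure (convexHull ℝ ((convexHull ℝ (A + B)).extremePoints ℝ)) := hKM.symm
      _ ⊆ closure (newtonPolygon (F * G)) := closure_mono hsub
      _ = newtonPolygon (F * G) := hclosed.closure_eq
  exact Set.Subset.antisymm h1 h2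
end
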